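/- arXiv:1805.02038 — 2 statements merged into one kernel-verified Lean document; each statement's English description precedes it below -/
import Mathlib

section
/- For points U = (u₁,u₂), V = (v₁,v₂), Z = (z₁,z₂) in ℚ²: Z = (u₁, v₂) if and only if there exist points U', V' such that U' (N) U, U' (N) Z, V' (E) V, and V' (E) Z. (This witnesses the pp-homotopy of the composed interpretation with the identity for the Cardinal Direction Calculus.) -/
/-- `A (N) B`: A₁ = B₁ ∧ A₂ > B₂. -/
def CDCn (A B : ℚ × ℚ) : Prop := A.1 = B.1 ∧ A.2 > B.2

/-- `A (E) B`: A₁ > B₁ ∧ A₂ = B₂. -/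
def CDCe (A B : ℚ × ℚ) : Prop := A.1 > B.1 ∧ A.2 = B.2

theorem CDC_pp_homotopy (U V Z : ℚ × ℚ) :
    Z = (U.1, V.2) ↔
      ∃ U' V' : ℚ × ℚ, CDCn U' U ∧ CDCn U' Z ∧ CDCe V' V ∧ CDCe V' Z := by
  constructor
  · rintro rfl
    refine ⟨(U.1, max U.2 V.2 + 1), (max V.1 U.1 + 1, V.2),
      ⟨rfl, by simp; linarith [le_max_left U.2 V.2]⟩,
      ⟨rfl, by simp; linarith [le_max_right U.2 V.2]⟩,
      ⟨by simp; linarith [le_max_left V.1 U.1], rfl⟩,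
      ⟨by simp; linarith [le_max_right V.1 U.1], rfl⟩⟩
  · rintro ⟨U', V', ⟨h1, _⟩, ⟨h2, _⟩, ⟨_, h3⟩, ⟨_, h4⟩⟩
    ext <;> simp [← h2, h1, ← h4, h3]
end

section
/- For rectangles W₁, W₂, W₃, W₄ and Z (each a pair of intervals over ℚ), the conjunction W₁ (s,⊤) Z ∧ W₂ (f,⊤) Z ∧ W₃ (⊤,s) Z ∧ W₄ (⊤,f) Z holds if and only if Z = ([W₁₁⁻, W₂₁⁺], [W₃₂⁻, W₄₂⁺]) together with the strict inequalities W₁₁⁺ < W₂₁⁺, W₂₁⁻ > W₁₁⁻, W₃₂⁺ < W₄₂⁺, W₄₂⁻ > W₃₂⁻ (and Z being a valid rectangle). In particular Z is uniquely determined by W₁, W₂, W₃, W₄ when it exists. -/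
/-- An interval is a pair of rationals with strictly increasing endpoints. -/
def IsInterval (X : ℚ × ℚ) : Prop := X.1 < X.2

/-- A rectangle is a pair of intervals. -/
def IsRect (X : (ℚ × ℚ) × (ℚ × ℚ)) : Prop := IsInterval X.1 ∧ IsInterval X.2

/-- `A (s) B`: A⁻ = B⁻ ∧ A⁺ < B⁺. -/
def AllenS (A B : ℚ × ℚ) : Prop := A.1 = B.1 ∧ A.2 < B.2

/-- `A (f) B`: A⁺ = B⁺ ∧ A⁻ > B⁻. -/
def AllenF (A B : ℚ × ℚ) : Prop := A.2 = B.2 ∧ A.1 > B.1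

def STop (X Y : (ℚ × ℚ) × (ℚ × ℚ)) : Prop := AllenS X.1 Y.1
def FTop (X Y : (ℚ × ℚ) × (ℚ × ℚ)) : Prop := AllenF X.1 Y.1
def TopS (X Y : (ℚ × ℚ) × (ℚ × ℚ)) : Prop := AllenS X.2 Y.2
def TopF (X Y : (ℚ × ℚ) × (ℚ × ℚ)) : Prop := AllenF X.2 Y.2

theorem rectangle_pp_homotopy :
    (∀ W₁ W₂ W₃ W₄ Z : (ℚ × ℚ) × (ℚ × ℚ),
      IsRect W₁ → IsRect W₂ → IsRect W₃ → IsRect W₄ → IsRect Z →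
      ((STop W₁ Z ∧ FTop W₂ Z ∧ TopS W₃ Z ∧ TopF W₄ Z) ↔
        (Z = ((W₁.1.1, W₂.1.2), (W₃.2.1, W₄.2.2)) ∧
         W₁.1.2 < W₂.1.2 ∧ W₂.1.1 > W₁.1.1 ∧
         W₃.2.2 < W₄.2.2 ∧ W₄.2.1 > W₃.2.1))) ∧
    (∀ W₁ W₂ W₃ W₄ Z Z' : (ℚ × ℚ) × (ℚ × ℚ),
      IsRect W₁ → IsRect W₂ → IsRect W₃ → IsRect W₄ → IsRect Z → IsRect Z' →
      (STop W₁ Z ∧ FTop W₂ Z ∧ TopS W₃ Z ∧ TopF W₄ Z) →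
      (STop W₁ Z' ∧ FTop W₂ Z' ∧ TopS W₃ Z' ∧ TopF W₄ Z') →
      Z = Z') := by
  constructor
  · intro W₁ W₂ W₃ W₄ Z h1 h2 h3 h4 hZ
    simp only [STop, FTop, TopS, TopF, AllenS, AllenF, Prod.ext_iff]
    constructor
    · rintro ⟨⟨a1,a2⟩,⟨b1,b2⟩,⟨c1,c2⟩,⟨d1,d2⟩⟩
      refine ⟨⟨⟨a1.symm, b1.symm⟩, ⟨c1.symm, d1.symm⟩⟩, ?_, ?_, ?_, ?_⟩ <;> linarith
    · rintro ⟨⟨⟨e1,e2⟩,⟨e3,e4⟩⟩, h5, h6, h7, h8⟩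
      refine ⟨⟨e1.symm, ?_⟩, ⟨e2.symm, ?_⟩, ⟨e3.symm, ?_⟩, ⟨e4.symm, ?_⟩⟩ <;> linarith
  · intro W₁ W₂ W₃ W₄ Z Z' h1 h2 h3 h4 hZ hZ' hA hB
    obtain ⟨⟨a1,a2⟩,⟨b1,b2⟩,⟨c1,c2⟩,⟨d1,d2⟩⟩ := hA
    obtain ⟨⟨a1',a2'⟩,⟨b1',b2'⟩,⟨c1',c2'⟩,⟨d1',d2'⟩⟩ := hB
    have : Z.1 = Z'.1 := Prod.ext (a1 ▸ a1') (b1 ▸ b1')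
    have : Z.2 = Z'.2 := Prod.ext (c1 ▸ c1') (d1 ▸ d1')
    exact Prod.ext ‹Z.1 = Z'.1› ‹Z.2 = Z'.2›
end
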